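/- Under the meta-learning data generating assumptions, for all M, T ≥ 1, every m ∈ {1,…,M}, all ε, ε' ≥ 0, every random variable ψ̃ (finitely valued) with I[H_{M,T} ; ψ̃ | ψ] = 0 and I[H_{M,T} ; ψ | ψ̃] ≤ ε·MT, and every random variable θ̃ (finitely valued) with I[(H_{M,T}, ψ) ; θ̃ | θ_m] = 0 and I[D_m ; θ_m | (θ̃, ψ)] ≤ ε'·T, the total estimation error satisfies I[H_{M,T} ; ψ]/(MT) + I[D_m ; θ_m | ψ]/T ≤ I[ψ ; ψ̃]/(MT) + ε + I[θ_m ; θ̃ | ψ]/T + ε'. (Paper: upper bound of Theorem 'rate-distortion estimation error bound' for meta-learning, with the infima over compressions unfolded into a universally quantified statement.) -/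

import Mathlib

open MeasureTheory ProbabilityTheory Real

variable {Ω : Type*} [MeasureSpace Ω]

noncomputable def prob {𝒳 : Type*} (X : Ω → 𝒳) (x : 𝒳) : ℝ :=
  (ℙ (X ⁻¹' {x})).toReal

noncomputable def entropy {𝒳 : Type*} [Fintype 𝒳] (X : Ω → 𝒳) : ℝ :=
  -∑ x, prob X x * Real.log (prob X x)

noncomputable def condEntropy {𝒳 𝒴 : Type*} [Fintype 𝒳] [Fintype 𝒴]
    (X : Ω → 𝒳) (Y : Ω → 𝒴) : ℝ :=
  entropy (fun ω => (X ω, Y ω)) - entropy Y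

noncomputable def mutualInfo {𝒳 𝒴 : Type*} [Fintype 𝒳] [Fintype 𝒴]
    (X : Ω → 𝒳) (Y : Ω → 𝒴) : ℝ :=
  entropy X + entropy Y - entropy (fun ω => (X ω, Y ω))

noncomputable def condMutualInfo {𝒳 𝒴 𝒵 : Type*} [Fintype 𝒳] [Fintype 𝒴] [Fintype 𝒵]
    (X : Ω → 𝒳) (Y : Ω → 𝒴) (Z : Ω → 𝒵) : ℝ :=
  entropy (fun ω => (X ω, Z ω)) + entropy (fun ω => (Y ω, Z ω))
    - entropy (fun ω => (X ω, Y ω, Z ω)) - entropy Z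

def hist {𝒳 : Type*} {T : ℕ} (X : Fin T → Ω → 𝒳) (t : ℕ) (ht : t ≤ T) : Ω → (Fin t → 𝒳) :=
  fun ω i => X (Fin.castLE ht i) ω

/-!
Both terms are controlled by one inequality,
`I[U;V|Z] ≤ I[V;C|Z] + I[U;C|(V,Z)] + I[U;V|(C,Z)]`, which follows from two applications of
the chain rule and the nonnegativity of conditional mutual information (Gibbs' inequality).
For the meta-parameter take `(U, V, C) = (H, ψ, ψ̃)` with trivial `Z`: the middle term vanishes
by assumption. For the document parameter take `(U, V, C, Z) = (D_m, θ_m, θ̃, ψ)`: since `D_m`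
is a coordinate of `H`, data processing bounds the middle term by `I[θ̃ ; (H, ψ) | θ_m] = 0`.
Dividing by `MT` and by `T` gives the claim.
-/

open Function

theorem sum_mul_log_le_sum_mul_log {ι : Type*} (s : Finset ι) {p r : ι → ℝ}
    (hp : ∀ i ∈ s, 0 ≤ p i) (hr : ∀ i ∈ s, 0 ≤ r i) (hpr : ∀ i ∈ s, r i = 0 → p i = 0)
    (hsum : ∑ i ∈ s, r i ≤ ∑ i ∈ s, p i) :
    ∑ i ∈ s, p i * log (r i) ≤ ∑ i ∈ s, p i * log (p i) := by
  have hterm : ∀ i ∈ s, p i * log (r i) - p i * log (p i) ≤ r i - p i := by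
    intro i hi
    rcases (hp i hi).eq_or_lt with hp0 | hp0
    · simp [← hp0, hr i hi]
    have hr0 : 0 < r i := (hr i hi).lt_of_ne fun h => hp0.ne' (hpr i hi h.symm)
    have hlog := log_le_sub_one_of_pos (div_pos hr0 hp0)
    rw [log_div hr0.ne' hp0.ne'] at hlog
    have := mul_le_mul_of_nonneg_left hlog hp0.le
    rwa [mul_sub, mul_sub, mul_div_cancel₀ _ hp0.ne', mul_one] at this
  have := Finset.sum_le_sum hterm
  rw [Finset.sum_sub_distrib, Finset.sum_sub_distrib] at this
  linarith

theorem div_le_div_add_of_le_add_mul {𝕜 : Type*} [Field 𝕜] [LinearOrder 𝕜] [IsStrictOrderedRing 𝕜]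
    {a b c ε : 𝕜} (hc : 0 < c) (h : a ≤ b + ε * c) : a / c ≤ b / c + ε := by
  rwa [div_add' _ _ _ hc.ne', div_le_div_iff_of_pos_right hc]

section Prob

variable {α β : Type*}

theorem prob_nonneg (W : Ω → α) (a : α) : 0 ≤ prob W a := ENNReal.toReal_nonneg

theorem prob_comp_of_injective {f : α → β} (hf : f.Injective) (W : Ω → α) (a : α) :
    prob (fun ω => f (W ω)) (f a) = prob W a := by
  simp only [prob, Set.preimage, Set.mem_singleton_iff, hf.eq_iff]

theorem entropy_comp_of_injective [Fintype α] [Fintype β] {f : α → β} (hf : f.Injective)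
    (W : Ω → α) : entropy (fun ω => f (W ω)) = entropy W := by
  have hout : ∀ b ∉ Set.range f, prob (fun ω => f (W ω)) b = 0 := by
    intro b hb
    have : (fun ω => f (W ω)) ⁻¹' {b} = ∅ := by
      ext ω
      simpa using fun h => hb ⟨W ω, h⟩
    simp [prob, this]
  rw [entropy, entropy, Fintype.sum_of_injective f hf _
    (fun b => prob (fun ω => f (W ω)) b * log (prob (fun ω => f (W ω)) b))
    (fun b hb => by simp [hout b hb]) (fun a => by rw [prob_comp_of_injective hf])]

variable [IsFiniteMeasure (ℙ : Measure Ω)]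

theorem prob_le_prob_comp (W : Ω → α) (f : α → β) (a : α) :
    prob W a ≤ prob (fun ω => f (W ω)) (f a) :=
  ENNReal.toReal_mono (measure_ne_top _ _) (measure_mono fun ω hω => by simp_all)

variable [MeasurableSpace α] [MeasurableSingletonClass α] [Fintype α] {W : Ω → α}

theorem sum_prob_fiber [DecidableEq β] (hW : Measurable W) (f : α → β) (b : β) :
    ∑ a with f a = b, prob W a = prob (fun ω => f (W ω)) b := by
  have hfiber : (fun ω => f (W ω)) ⁻¹' {b} = W ⁻¹' ↑(Finset.univ.filter fun a => f a = b) := by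
    ext ω
    simp
  rw [prob, hfiber, ← sum_measure_preimage_singleton _ fun a _ => hW (measurableSet_singleton a),
    ENNReal.toReal_sum fun _ _ => measure_ne_top _ _]
  rfl

theorem sum_prob_pair_left (hW : Measurable W) (V : Ω → β) (b : β) :
    ∑ a, prob (fun ω => (W ω, V ω)) (a, b) = prob V b := by
  have hpair : ∀ a, prob (fun ω => (W ω, V ω)) (a, b)
      = (((ℙ : Measure Ω).restrict (V ⁻¹' {b})) (W ⁻¹' {a})).toReal := by
    intro a
    rw [prob, Measure.restrict_apply (hW (measurableSet_singleton a))]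
    congr 2
    ext ω
    simp
  simp only [hpair]
  rw [← ENNReal.toReal_sum fun _ _ => measure_ne_top _ _,
    sum_measure_preimage_singleton _ fun a _ => hW (measurableSet_singleton a)]
  simp [prob]

theorem sum_sum_prob_pair_mul_div {γ : Type*} [Fintype β] [MeasurableSpace β]
    [MeasurableSingletonClass β] {V : Ω → β} (hW : Measurable W) (hV : Measurable V)
    (U : Ω → γ) (c : γ) :
    ∑ a, ∑ b, prob (fun ω => (W ω, U ω)) (a, c) * prob (fun ω => (V ω, U ω)) (b, c)
      / prob U c = prob U c := by
  simp only [← Finset.sum_div]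
  rw [← Finset.sum_mul_sum, sum_prob_pair_left hW, sum_prob_pair_left hV, mul_self_div_self]

theorem entropy_comp [Fintype β] (hW : Measurable W) (f : α → β) :
    entropy (fun ω => f (W ω)) = -∑ a, prob W a * log (prob (fun ω => f (W ω)) (f a)) := by
  classical
  rw [entropy, ← Finset.sum_fiberwise Finset.univ f]
  congr 1
  refine Finset.sum_congr rfl fun b _ => ?_
  nth_rewrite 1 [← sum_prob_fiber hW f b]
  rw [Finset.sum_mul]
  exact Finset.sum_congr rfl fun a ha => by rw [(Finset.mem_filter.1 ha).2]

end Prob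

section Identities

variable {𝒳 𝒴 𝒵 𝒲 : Type*} [Fintype 𝒳] [Fintype 𝒴] [Fintype 𝒵] [Fintype 𝒲]

theorem condMutualInfo_comm (X : Ω → 𝒳) (Y : Ω → 𝒴) (Z : Ω → 𝒵) :
    condMutualInfo X Y Z = condMutualInfo Y X Z := by
  have h : entropy (fun ω => (Y ω, X ω, Z ω)) = entropy (fun ω => (X ω, Y ω, Z ω)) :=
    entropy_comp_of_injective (f := fun w : 𝒳 × 𝒴 × 𝒵 => (w.2.1, w.1, w.2.2))
      (fun _ _ h => by simp_all [Prod.ext_iff]) (fun ω => (X ω, Y ω, Z ω))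
  simp only [condMutualInfo, h]
  ring

theorem condMutualInfo_prod_eq_add (X : Ω → 𝒳) (Y : Ω → 𝒴) (W : Ω → 𝒲) (Z : Ω → 𝒵) :
    condMutualInfo X (fun ω => (Y ω, W ω)) Z
      = condMutualInfo X Y Z + condMutualInfo X W (fun ω => (Y ω, Z ω)) := by
  have h₁ : entropy (fun ω => ((Y ω, W ω), Z ω)) = entropy (fun ω => (W ω, Y ω, Z ω)) :=
    entropy_comp_of_injective (f := fun w : 𝒲 × 𝒴 × 𝒵 => ((w.2.1, w.1), w.2.2))
      (fun _ _ h => by simp_all [Prod.ext_iff]) (fun ω => (W ω, Y ω, Z ω))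
  have h₂ : entropy (fun ω => (X ω, (Y ω, W ω), Z ω))
      = entropy (fun ω => (X ω, W ω, Y ω, Z ω)) :=
    entropy_comp_of_injective (f := fun w : 𝒳 × 𝒲 × 𝒴 × 𝒵 => (w.1, (w.2.2.1, w.2.1), w.2.2.2))
      (fun _ _ h => by simp_all [Prod.ext_iff]) (fun ω => (X ω, W ω, Y ω, Z ω))
  simp only [condMutualInfo, h₁, h₂]
  ring

theorem condMutualInfo_comp_right_of_injective {j : 𝒴 → 𝒲} (hj : j.Injective)
    (X : Ω → 𝒳) (Y : Ω → 𝒴) (Z : Ω → 𝒵) :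
    condMutualInfo X (fun ω => j (Y ω)) Z = condMutualInfo X Y Z := by
  have h₁ : entropy (fun ω => (j (Y ω), Z ω)) = entropy (fun ω => (Y ω, Z ω)) :=
    entropy_comp_of_injective (f := Prod.map j id) (hj.prodMap injective_id) (fun ω => (Y ω, Z ω))
  have h₂ : entropy (fun ω => (X ω, j (Y ω), Z ω)) = entropy (fun ω => (X ω, Y ω, Z ω)) :=
    entropy_comp_of_injective (f := Prod.map id (Prod.map j id))
      (injective_id.prodMap (hj.prodMap injective_id)) (fun ω => (X ω, Y ω, Z ω))
  simp only [condMutualInfo, h₁, h₂]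

theorem condMutualInfo_comp_cond_of_injective {j : 𝒵 → 𝒲} (hj : j.Injective)
    (X : Ω → 𝒳) (Y : Ω → 𝒴) (Z : Ω → 𝒵) :
    condMutualInfo X Y (fun ω => j (Z ω)) = condMutualInfo X Y Z := by
  have h₁ : entropy (fun ω => (X ω, j (Z ω))) = entropy (fun ω => (X ω, Z ω)) :=
    entropy_comp_of_injective (f := Prod.map id j) (injective_id.prodMap hj) (fun ω => (X ω, Z ω))
  have h₂ : entropy (fun ω => (Y ω, j (Z ω))) = entropy (fun ω => (Y ω, Z ω)) :=
    entropy_comp_of_injective (f := Prod.map id j) (injective_id.prodMap hj) (fun ω => (Y ω, Z ω))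
  have h₃ : entropy (fun ω => (X ω, Y ω, j (Z ω))) = entropy (fun ω => (X ω, Y ω, Z ω)) :=
    entropy_comp_of_injective (f := Prod.map id (Prod.map id j))
      (injective_id.prodMap (injective_id.prodMap hj)) (fun ω => (X ω, Y ω, Z ω))
  simp only [condMutualInfo, h₁, h₂, h₃, entropy_comp_of_injective hj]

theorem condMutualInfo_comp_self_cond_eq_zero (X : Ω → 𝒳) (Y : Ω → 𝒴) (g : 𝒴 → 𝒲)
    (Z : Ω → 𝒵) : condMutualInfo X (fun ω => g (Y ω)) (fun ω => (Y ω, Z ω)) = 0 := by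
  have h₁ : entropy (fun ω => (g (Y ω), Y ω, Z ω)) = entropy (fun ω => (Y ω, Z ω)) :=
    entropy_comp_of_injective (f := fun w : 𝒴 × 𝒵 => (g w.1, w))
      (fun _ _ h => (Prod.ext_iff.1 h).2) (fun ω => (Y ω, Z ω))
  have h₂ : entropy (fun ω => (X ω, g (Y ω), Y ω, Z ω)) = entropy (fun ω => (X ω, Y ω, Z ω)) :=
    entropy_comp_of_injective (f := fun w : 𝒳 × 𝒴 × 𝒵 => (w.1, g w.2.1, w.2))
      (fun _ _ h => by simp_all [Prod.ext_iff]) (fun ω => (X ω, Y ω, Z ω))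
  simp only [condMutualInfo, h₁, h₂]
  ring

end Identities

section ProbabilityMeasure

variable [IsProbabilityMeasure (ℙ : Measure Ω)]
  {𝒳 𝒴 𝒵 𝒲 : Type*} [Fintype 𝒳] [Fintype 𝒴] [Fintype 𝒵] [Fintype 𝒲]

theorem sum_prob {α : Type*} [MeasurableSpace α] [MeasurableSingletonClass α] [Fintype α]
    {W : Ω → α} (hW : Measurable W) : ∑ a, prob W a = 1 := by
  simp only [prob]
  rw [← ENNReal.toReal_sum fun _ _ => measure_ne_top _ _,
    sum_measure_preimage_singleton _ fun a _ => hW (measurableSet_singleton a)]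
  simp

theorem entropy_const {α : Type*} [Fintype α] (a : α) : entropy (fun _ : Ω => a) = 0 := by
  classical
  have hprob : ∀ b, prob (fun _ : Ω => a) b = if b = a then 1 else 0 := by
    intro b
    split_ifs with h
    · simp [prob, h]
    · simp [prob, Ne.symm h]
  simp [entropy, hprob, apply_ite]

theorem condMutualInfo_const_cond (X : Ω → 𝒳) (Y : Ω → 𝒴) (z : 𝒵) :
    condMutualInfo X Y (fun _ => z) = mutualInfo X Y := by
  have h₁ : entropy (fun ω => (X ω, z)) = entropy X :=
    entropy_comp_of_injective (f := fun x => (x, z)) (fun _ _ h => (Prod.ext_iff.1 h).1) X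
  have h₂ : entropy (fun ω => (Y ω, z)) = entropy Y :=
    entropy_comp_of_injective (f := fun y => (y, z)) (fun _ _ h => (Prod.ext_iff.1 h).1) Y
  have h₃ : entropy (fun ω => (X ω, Y ω, z)) = entropy (fun ω => (X ω, Y ω)) :=
    entropy_comp_of_injective (f := fun w : 𝒳 × 𝒴 => (w.1, w.2, z))
      (fun _ _ h => by simp_all [Prod.ext_iff]) (fun ω => (X ω, Y ω))
  simp only [condMutualInfo, mutualInfo, h₁, h₂, h₃, entropy_const, sub_zero]

variable [MeasurableSpace 𝒳] [MeasurableSingletonClass 𝒳]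
  [MeasurableSpace 𝒴] [MeasurableSingletonClass 𝒴]
  [MeasurableSpace 𝒵] [MeasurableSingletonClass 𝒵]
  [MeasurableSpace 𝒲] [MeasurableSingletonClass 𝒲]
  {X : Ω → 𝒳} {Y : Ω → 𝒴} {Z : Ω → 𝒵} {W : Ω → 𝒲}

theorem condMutualInfo_nonneg (hX : Measurable X) (hY : Measurable Y) (hZ : Measurable Z) :
    0 ≤ condMutualInfo X Y Z := by
  set W := fun ω => (X ω, Y ω, Z ω)
  have hW : Measurable W := hX.prodMk (hY.prodMk hZ)
  set q := prob W
  set pXZ := fun w : 𝒳 × 𝒴 × 𝒵 => prob (fun ω => (X ω, Z ω)) (w.1, w.2.2)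
  set pYZ := fun w : 𝒳 × 𝒴 × 𝒵 => prob (fun ω => (Y ω, Z ω)) (w.2.1, w.2.2)
  set pZ := fun w : 𝒳 × 𝒴 × 𝒵 => prob Z w.2.2
  -- `r` is the law of `(X, Y, Z)` under which `X` and `Y` are independent given `Z`.
  set r := fun w => pXZ w * pYZ w / pZ w
  have hXZ : entropy (fun ω => (X ω, Z ω)) = -∑ w, q w * log (pXZ w) :=
    entropy_comp hW fun w => (w.1, w.2.2)
  have hYZ : entropy (fun ω => (Y ω, Z ω)) = -∑ w, q w * log (pYZ w) :=
    entropy_comp hW fun w => (w.2.1, w.2.2)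
  have hZ' : entropy Z = -∑ w, q w * log (pZ w) := entropy_comp hW fun w => w.2.2
  have hmarginal_pos : ∀ w, 0 < q w → 0 < pXZ w ∧ 0 < pYZ w ∧ 0 < pZ w := fun w hq =>
    ⟨hq.trans_le (prob_le_prob_comp W (fun w => (w.1, w.2.2)) w),
      hq.trans_le (prob_le_prob_comp W (fun w => (w.2.1, w.2.2)) w),
      hq.trans_le (prob_le_prob_comp W (fun w => w.2.2) w)⟩
  have hlog_r : ∀ w,
      q w * log (r w) = q w * log (pXZ w) + q w * log (pYZ w) - q w * log (pZ w) := by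
    intro w
    rcases (prob_nonneg W w).eq_or_lt with hq | hq
    · simp [q, ← hq]
    obtain ⟨hXZ0, hYZ0, hZ0⟩ := hmarginal_pos w hq
    rw [log_div (mul_pos hXZ0 hYZ0).ne' hZ0.ne', log_mul hXZ0.ne' hYZ0.ne']
    ring
  have hsum_r : ∑ w, r w = ∑ c, prob Z c := by
    simp only [r, pXZ, pYZ, pZ, Fintype.sum_prod_type]
    conv_lhs => arg 2; ext a; rw [Finset.sum_comm]
    rw [Finset.sum_comm]
    exact Finset.sum_congr rfl fun c _ => sum_sum_prob_pair_mul_div hX hY Z c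
  have hgibbs := sum_mul_log_le_sum_mul_log Finset.univ (p := q) (r := r)
    (fun w _ => prob_nonneg W w)
    (fun w _ => div_nonneg (mul_nonneg (prob_nonneg _ _) (prob_nonneg _ _)) (prob_nonneg _ _))
    (fun w _ hr => by
      by_contra hq
      obtain ⟨hXZ0, hYZ0, hZ0⟩ := hmarginal_pos w ((prob_nonneg W w).lt_of_ne' hq)
      exact (div_pos (mul_pos hXZ0 hYZ0) hZ0).ne' hr)
    (by rw [hsum_r, sum_prob hZ, sum_prob hW])
  simp only [hlog_r, Finset.sum_sub_distrib, Finset.sum_add_distrib] at hgibbs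
  rw [condMutualInfo, hXZ, hYZ, hZ', entropy]
  linarith

theorem condMutualInfo_le_add_cond (hX : Measurable X) (hY : Measurable Y) (hZ : Measurable Z)
    (hW : Measurable W) :
    condMutualInfo X Y Z ≤ condMutualInfo X W Z + condMutualInfo X Y (fun ω => (W ω, Z ω)) := by
  have hYW := condMutualInfo_prod_eq_add X Y W Z
  have hWY := condMutualInfo_prod_eq_add X W Y Z
  have hswap := condMutualInfo_comp_right_of_injective Prod.swap_injective X
    (fun ω => (W ω, Y ω)) Z
  have := condMutualInfo_nonneg hX hW (hY.prodMk hZ)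
  dsimp only [Prod.swap] at hswap
  linarith

theorem condMutualInfo_comp_right_le (hX : Measurable X) (hY : Measurable Y)
    (hZ : Measurable Z) (g : 𝒴 → 𝒲) :
    condMutualInfo X (fun ω => g (Y ω)) Z ≤ condMutualInfo X Y Z := by
  have := condMutualInfo_le_add_cond (Y := fun ω => g (Y ω)) hX
    ((measurable_of_finite g).comp hY) hZ hY
  rwa [condMutualInfo_comp_self_cond_eq_zero, add_zero] at this

theorem condMutualInfo_prod_cond_le {𝒱 : Type*} [Fintype 𝒱] (V : Ω → 𝒱) (hX : Measurable X)
    (hZ : Measurable Z) (hW : Measurable W) :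
    condMutualInfo X V (fun ω => (W ω, Z ω)) ≤ condMutualInfo X (fun ω => (V ω, Z ω)) W := by
  have hchain := condMutualInfo_prod_eq_add X Z V W
  have hswap := condMutualInfo_comp_right_of_injective Prod.swap_injective X
    (fun ω => (Z ω, V ω)) W
  have hswap' := condMutualInfo_comp_cond_of_injective Prod.swap_injective X V
    (fun ω => (Z ω, W ω))
  have := condMutualInfo_nonneg hX hZ hW
  dsimp only [Prod.swap] at hswap hswap'
  linarith

theorem condMutualInfo_le_rate_add_distortion (hX : Measurable X) (hY : Measurable Y)
    (hZ : Measurable Z) (hW : Measurable W) :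
    condMutualInfo X Y Z ≤ condMutualInfo Y W Z + condMutualInfo X W (fun ω => (Y ω, Z ω))
      + condMutualInfo X Y (fun ω => (W ω, Z ω)) := by
  have h₁ := condMutualInfo_le_add_cond hX hY hZ hW
  have h₂ := condMutualInfo_le_add_cond hW hX hZ hY
  rw [condMutualInfo_comm W, condMutualInfo_comm W, condMutualInfo_comm W] at h₂
  linarith

theorem mutualInfo_le_rate_add_distortion (hX : Measurable X) (hY : Measurable Y)
    (hW : Measurable W) :
    mutualInfo X Y ≤ mutualInfo Y W + condMutualInfo X W Y + condMutualInfo X Y W := by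
  have h := condMutualInfo_le_rate_add_distortion hX hY (measurable_const (a := ())) hW
  simp only [condMutualInfo_const_cond] at h
  have hpair : (fun v : 𝒴 => (v, ())).Injective := fun _ _ h => (Prod.ext_iff.1 h).1
  have hpair' : (fun w : 𝒲 => (w, ())).Injective := fun _ _ h => (Prod.ext_iff.1 h).1
  rwa [condMutualInfo_comp_cond_of_injective hpair,
    condMutualInfo_comp_cond_of_injective hpair'] at h

end ProbabilityMeasure

theorem meta_rate_distortion_upper_bound_general
    {Ω : Type*} [MeasureSpace Ω] [IsProbabilityMeasure (ℙ : Measure Ω)]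
    {𝒳 Θ Ψ Ψ' Θ' : Type*} [Fintype 𝒳] [Fintype Θ]
    [Fintype Ψ] [Fintype Ψ'] [Fintype Θ']
    [MeasurableSpace 𝒳] [MeasurableSingletonClass 𝒳]
    [MeasurableSpace Θ] [MeasurableSingletonClass Θ]
    [MeasurableSpace Ψ] [MeasurableSingletonClass Ψ]
    [MeasurableSpace Ψ'] [MeasurableSingletonClass Ψ']
    [MeasurableSpace Θ'] [MeasurableSingletonClass Θ']
    (M T : ℕ) (hT : 1 ≤ T)
    (ψ : Ω → Ψ) (θ : Fin M → Ω → Θ) (X : Fin M → Fin T → Ω → 𝒳)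
    (hψ : Measurable ψ) (hθ : ∀ m, Measurable (θ m)) (hX : ∀ m t, Measurable (X m t))
    (m : Fin M)
    (ε ε' : ℝ)
    (ψ' : Ω → Ψ') (hψ' : Measurable ψ')
    (θ' : Ω → Θ') (hθ' : Measurable θ')
    (hψ'CI : condMutualInfo (fun ω (m' : Fin M) (t : Fin T) => X m' t ω) ψ' ψ = 0)
    (hψ'dist : condMutualInfo (fun ω (m' : Fin M) (t : Fin T) => X m' t ω) ψ ψ'
      ≤ ε * (M * T))
    (hθ'CI : condMutualInfo
      (fun ω => ((fun (m' : Fin M) (t : Fin T) => X m' t ω), ψ ω)) θ' (θ m) = 0)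
    (hθ'dist : condMutualInfo (fun ω (t : Fin T) => X m t ω) (θ m)
      (fun ω => (θ' ω, ψ ω)) ≤ ε' * T) :
    mutualInfo (fun ω (m' : Fin M) (t : Fin T) => X m' t ω) ψ / ((M : ℝ) * T)
        + condMutualInfo (fun ω (t : Fin T) => X m t ω) (θ m) ψ / T
      ≤ mutualInfo ψ ψ' / ((M : ℝ) * T) + ε + condMutualInfo (θ m) θ' ψ / T + ε' := by
  set H := fun ω (m' : Fin M) (t : Fin T) => X m' t ω
  set D := fun ω (t : Fin T) => X m t ω
  have hH : Measurable H := by fun_prop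
  have hD : Measurable D := by fun_prop
  have hTpos : (0 : ℝ) < T := by exact_mod_cast hT
  have hMpos : (0 : ℝ) < M := by exact_mod_cast m.pos
  have hmeta : mutualInfo H ψ ≤ mutualInfo ψ ψ' + ε * (M * T) := by
    have := mutualInfo_le_rate_add_distortion hH hψ hψ'
    linarith
  have hleak : condMutualInfo D θ' (fun ω => (θ m ω, ψ ω)) ≤ 0 := calc
    _ = condMutualInfo θ' D (fun ω => (θ m ω, ψ ω)) := condMutualInfo_comm _ _ _
    _ ≤ condMutualInfo θ' H (fun ω => (θ m ω, ψ ω)) :=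
      condMutualInfo_comp_right_le hθ' hH ((hθ m).prodMk hψ) fun h => h m
    _ ≤ condMutualInfo θ' (fun ω => (H ω, ψ ω)) (θ m) :=
      condMutualInfo_prod_cond_le H hθ' hψ (hθ m)
    _ = 0 := by rw [condMutualInfo_comm, hθ'CI]
  have hdoc : condMutualInfo D (θ m) ψ ≤ condMutualInfo (θ m) θ' ψ + ε' * T := by
    have := condMutualInfo_le_rate_add_distortion hD (hθ m) hψ hθ'
    linarith
  have := div_le_div_add_of_le_add_mul (mul_pos hMpos hTpos) hmeta
  have := div_le_div_add_of_le_add_mul hTpos hdoc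
  linarith

/-- **Rate-distortion estimation error bound for meta-learning, upper bound**
(paper, Theorem 4, upper bound, with the infima over compressions unfolded into a
universally quantified statement).  Under the meta-learning data generating assumptions,
for every compression `ψ̃` of the meta-parameter with `I[H_{M,T} ; ψ̃ | ψ] = 0` and
`I[H_{M,T} ; ψ | ψ̃] ≤ ε M T`, and every compression `θ̃` of the document parameter with
`I[(H_{M,T}, ψ) ; θ̃ | θ_m] = 0` and `I[D_m ; θ_m | (θ̃, ψ)] ≤ ε' T`, the total estimation
error satisfies
`I[H_{M,T} ; ψ]/(MT) + I[D_m ; θ_m | ψ]/T ≤ I[ψ ; ψ̃]/(MT) + ε + I[θ_m ; θ̃ | ψ]/T + ε'`. -/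
theorem meta_rate_distortion_upper_bound
    {Ω : Type*} [MeasureSpace Ω] [IsProbabilityMeasure (ℙ : Measure Ω)]
    {𝒳 Θ Ψ Ψ' Θ' : Type*} [Fintype 𝒳] [Nonempty 𝒳] [Fintype Θ] [Nonempty Θ]
    [Fintype Ψ] [Nonempty Ψ] [Fintype Ψ'] [Nonempty Ψ'] [Fintype Θ'] [Nonempty Θ']
    [MeasurableSpace 𝒳] [MeasurableSingletonClass 𝒳]
    [MeasurableSpace Θ] [MeasurableSingletonClass Θ]
    [MeasurableSpace Ψ] [MeasurableSingletonClass Ψ]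
    [MeasurableSpace Ψ'] [MeasurableSingletonClass Ψ']
    [MeasurableSpace Θ'] [MeasurableSingletonClass Θ']
    (M T : ℕ) (hM : 1 ≤ M) (hT : 1 ≤ T)
    (ψ : Ω → Ψ) (θ : Fin M → Ω → Θ) (X : Fin M → Fin T → Ω → 𝒳)
    (hψ : Measurable ψ) (hθ : ∀ m, Measurable (θ m)) (hX : ∀ m t, Measurable (X m t))
    -- (i) conditioned on ψ, the pairs (θ_m, D_m) are i.i.d.
    (hiid : ∃ κ : Ψ → Θ × (Fin T → 𝒳) → ℝ,
      (∀ s u, 0 ≤ κ s u) ∧ (∀ s, ∑ u, κ s u = 1) ∧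
      ∀ (s : Ψ) (v : Fin M → Θ × (Fin T → 𝒳)),
        prob (fun ω => (ψ ω, fun m => (θ m ω, fun t => X m t ω))) (s, v)
          = prob ψ s * ∏ m, κ s (v m))
    -- (ii) the meta-parameter carries no extra information about D_m beyond θ_m
    (hCI : ∀ m : Fin M, condMutualInfo (fun ω (t : Fin T) => X m t ω) ψ (θ m) = 0)
    (m : Fin M)
    (ε ε' : ℝ) (hε : 0 ≤ ε) (hε' : 0 ≤ ε')
    (ψ' : Ω → Ψ') (hψ' : Measurable ψ')
    (θ' : Ω → Θ') (hθ' : Measurable θ')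
    (hψ'CI : condMutualInfo (fun ω (m' : Fin M) (t : Fin T) => X m' t ω) ψ' ψ = 0)
    (hψ'dist : condMutualInfo (fun ω (m' : Fin M) (t : Fin T) => X m' t ω) ψ ψ'
      ≤ ε * (M * T))
    (hθ'CI : condMutualInfo
      (fun ω => ((fun (m' : Fin M) (t : Fin T) => X m' t ω), ψ ω)) θ' (θ m) = 0)
    (hθ'dist : condMutualInfo (fun ω (t : Fin T) => X m t ω) (θ m)
      (fun ω => (θ' ω, ψ ω)) ≤ ε' * T) :
    mutualInfo (fun ω (m' : Fin M) (t : Fin T) => X m' t ω) ψ / ((M : ℝ) * T)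
        + condMutualInfo (fun ω (t : Fin T) => X m t ω) (θ m) ψ / T
      ≤ mutualInfo ψ ψ' / ((M : ℝ) * T) + ε + condMutualInfo (θ m) θ' ψ / T + ε' :=
  meta_rate_distortion_upper_bound_general M T hT ψ θ X hψ hθ hX m ε ε' ψ' hψ' θ' hθ' hψ'CI hψ'dist
    hθ'CI hθ'dist
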